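/- Let δ > 0, l > 0, let h₁, h₂ : [0,4π] → ℝ and φ : [0,l] → ℝ be the helper functions of Construction 2.1, and define Ψ : [0,l] × [0,4π] → ℝ² by Ψ(r,θ) = (φ(r)h₁(θ), φ(r)h₂(θ)). Then for every r ∈ [0,l] and every θ ∈ [0,2π], ‖Ψ(r,θ) − Ψ(r, θ + 2π)‖ ≥ (δ/2)·φ(r), where ‖·‖ is the Euclidean norm on ℝ². -/

import Mathlib

/-!
For `θ ∈ [0, 2π]` the difference `Ψ(r, θ) - Ψ(r, θ + 2π)` is `φ(r) · (δ/π) · (θ - π, -2s)`,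
where `s = min θ (2π - θ)` is the distance from `θ` to the ends of `[0, 2π]`. Since
`(π - s)² + (2s)² ≥ π²/4` for every real `s`, its length is at least `(δ/2) · φ(r)`.
-/

open Set Real

/-- The helper function `h₁` of Construction 2.1: `h₁(θ) = (δ/(2π))·(2π − |θ − 2π|)`. -/
noncomputable def helperH1 (δ θ : ℝ) : ℝ := (δ / (2 * π)) * (2 * π - |θ - 2 * π|)

/-- The helper function `h₂` of Construction 2.1: `h₂(θ) = −(δ/π)θ` on `[0,π]`,
`h₂(θ) = −δ + (δ/π)(θ−π)` on `[π,3π]`, `h₂(θ) = δ − (δ/π)(θ−3π)` on `[3π,4π]`. -/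
noncomputable def helperH2 (δ θ : ℝ) : ℝ :=
  if θ ≤ π then -(δ / π) * θ
  else if θ ≤ 3 * π then -δ + (δ / π) * (θ - π)
  else δ - (δ / π) * (θ - 3 * π)

/-- The cut-off function `φ` of Construction 2.1 (equation (4)), with width parameter `l`. -/
noncomputable def cutOff (l r : ℝ) : ℝ :=
  if r ≤ l / 5 then 5 * r
  else if r ≤ 4 * l / 5 then l
  else 5 * (l - r)

/-- The map `Ψ(r,θ) = (φ(r)h₁(θ), φ(r)h₂(θ))` of Construction 2.1, as a map into `ℝ²`
(given by its two components). -/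
noncomputable def PsiMap (δ l r θ : ℝ) : ℝ × ℝ :=
  (cutOff l r * helperH1 δ θ, cutOff l r * helperH2 δ θ)

theorem sq_div_four_le_sub_sq_add_sq (a s : ℝ) : a ^ 2 / 4 ≤ (a - s) ^ 2 + (2 * s) ^ 2 := by
  nlinarith [sq_nonneg (5 * s - a)]

theorem mul_le_sqrt_mul_sq_add_mul_sq {k c u v : ℝ} (hc : 0 ≤ c) (h : k ^ 2 ≤ u ^ 2 + v ^ 2) :
    k * c ≤ √((c * u) ^ 2 + (c * v) ^ 2) := by
  have hsqrt : √((c * u) ^ 2 + (c * v) ^ 2) = √(u ^ 2 + v ^ 2) * c := by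
    rw [show (c * u) ^ 2 + (c * v) ^ 2 = (u ^ 2 + v ^ 2) * c ^ 2 by ring,
      Real.sqrt_mul' _ (sq_nonneg c), Real.sqrt_sq hc]
  rw [hsqrt]
  exact mul_le_mul_of_nonneg_right ((le_abs_self k).trans (Real.abs_le_sqrt h)) hc

theorem cutOff_nonneg {l r : ℝ} (hr₀ : 0 ≤ r) (hrl : r ≤ l) : 0 ≤ cutOff l r := by
  unfold cutOff
  split_ifs <;> linarith

section Fiber

variable (δ : ℝ) {θ : ℝ}

theorem helperH1_sub_helperH1_add_two_pi (hθ : θ ∈ Icc 0 (2 * π)) :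
    helperH1 δ θ - helperH1 δ (θ + 2 * π) = δ / π * (θ - π) := by
  have hπ := Real.pi_pos
  rw [helperH1, helperH1, abs_of_nonpos (by linarith [hθ.2]),
    abs_of_nonneg (by linarith [hθ.1])]
  field_simp
  ring

theorem helperH2_sub_helperH2_add_two_pi_of_le_pi (hθ₀ : 0 ≤ θ) (hθπ : θ ≤ π) :
    helperH2 δ θ - helperH2 δ (θ + 2 * π) = δ / π * (-(2 * θ)) := by
  have hπ := Real.pi_pos
  rw [helperH2, helperH2, if_pos hθπ, if_neg (by linarith), if_pos (by linarith)]
  field_simp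
  ring

theorem helperH2_sub_helperH2_add_two_pi_of_pi_lt (hπθ : π < θ) (hθ : θ ≤ 2 * π) :
    helperH2 δ θ - helperH2 δ (θ + 2 * π) = δ / π * (2 * (θ - 2 * π)) := by
  have hπ := Real.pi_pos
  rw [helperH2, helperH2, if_neg hπθ.not_ge, if_pos (by linarith), if_neg (by linarith),
    if_neg (by linarith)]
  field_simp
  ring

theorem sq_half_le_helper_fiber_gap (hθ : θ ∈ Icc 0 (2 * π)) :
    (δ / 2) ^ 2 ≤ (helperH1 δ θ - helperH1 δ (θ + 2 * π)) ^ 2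
      + (helperH2 δ θ - helperH2 δ (θ + 2 * π)) ^ 2 := by
  have hπ : π ≠ 0 := Real.pi_ne_zero
  have hδ : (δ / 2) ^ 2 = (δ / π) ^ 2 * (π ^ 2 / 4) := by
    field_simp
    ring
  rw [helperH1_sub_helperH1_add_two_pi δ hθ, hδ]
  obtain ⟨s, hs₁, hs₂⟩ : ∃ s, (θ - π) ^ 2 = (π - s) ^ 2 ∧
      (helperH2 δ θ - helperH2 δ (θ + 2 * π)) ^ 2 = (δ / π) ^ 2 * (2 * s) ^ 2 := by
    rcases le_or_gt θ π with hθπ | hπθ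
    · refine ⟨θ, by ring, ?_⟩
      rw [helperH2_sub_helperH2_add_two_pi_of_le_pi δ hθ.1 hθπ]
      ring
    · refine ⟨2 * π - θ, by ring, ?_⟩
      rw [helperH2_sub_helperH2_add_two_pi_of_pi_lt δ hπθ hθ.2]
      ring
  calc (δ / π) ^ 2 * (π ^ 2 / 4) ≤ (δ / π) ^ 2 * ((π - s) ^ 2 + (2 * s) ^ 2) :=
        mul_le_mul_of_nonneg_left (sq_div_four_le_sub_sq_add_sq π s) (sq_nonneg _)
    _ = (δ / π * (θ - π)) ^ 2 + (helperH2 δ θ - helperH2 δ (θ + 2 * π)) ^ 2 := by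
        rw [hs₂, mul_pow (δ / π), hs₁]
        ring

end Fiber

theorem Psi_fiber_separation_general (δ l : ℝ) :
    ∀ r ∈ Icc (0:ℝ) l, ∀ θ ∈ Icc (0:ℝ) (2 * π),
      (δ / 2) * cutOff l r ≤
        Real.sqrt (((PsiMap δ l r θ).1 - (PsiMap δ l r (θ + 2 * π)).1) ^ 2
          + ((PsiMap δ l r θ).2 - (PsiMap δ l r (θ + 2 * π)).2) ^ 2) := by
  intro r hr θ hθ
  simp only [PsiMap, ← mul_sub]
  exact mul_le_sqrt_mul_sq_add_mul_sq (cutOff_nonneg hr.1 hr.2) (sq_half_le_helper_fiber_gap δ hθ)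

/-- The fiber-separation estimate (equation (5)) of Construction 2.1: for `r ∈ [0,l]` and
`θ ∈ [0,2π]`, the Euclidean distance between `Ψ(r,θ)` and `Ψ(r,θ+2π)` is at least
`(δ/2)·φ(r)`. -/
theorem Psi_fiber_separation (δ l : ℝ) (hδ : 0 < δ) (hl : 0 < l) :
    ∀ r ∈ Icc (0:ℝ) l, ∀ θ ∈ Icc (0:ℝ) (2 * π),
      (δ / 2) * cutOff l r ≤
        Real.sqrt (((PsiMap δ l r θ).1 - (PsiMap δ l r (θ + 2 * π)).1) ^ 2
          + ((PsiMap δ l r θ).2 - (PsiMap δ l r (θ + 2 * π)).2) ^ 2) :=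
  Psi_fiber_separation_general δ l
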